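/- arXiv:1406.1945 — 2 statements merged into one kernel-verified Lean document; each statement's English description precedes it below -/
import Mathlib

section
/- For the Kauffman bracket of a connected link diagram D with c(D) crossings, max-deg_A⟨D⟩ - min-deg_A⟨D⟩ ≤ 2(c(D) + |s_A(D)| + |s_B(D)| - 2), where ⟨D⟩ = Σ_s A^{a(s)-b(s)} (-A² - A⁻²)^{|s|-1} is the state sum over all 2^{c(D)} states. -/
open LaurentPolynomial

/-- Number of A-smoothings of a state (`false` = A-smoothing). -/
def aCount {c : ℕ} (s : Fin c → Bool) : ℕ := (Finset.univ.filter fun i => s i = false).card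

/-- Number of B-smoothings of a state (`true` = B-smoothing). -/
def bCount {c : ℕ} (s : Fin c → Bool) : ℕ := (Finset.univ.filter fun i => s i = true).card

/-!
The state `s` contributes `A^(a - b) δ^(|s| - 1)` with `δ = -A² - A⁻²`, so its A-degrees lie in
`[a - b - 2(|s| - 1), a - b + 2(|s| - 1)]`. Because one change of smoothing moves `|s|` by one,
`|s|` is at most `|s_A|` plus the Hamming distance `b(s)` from the all-A state, and at most
`|s_B| + a(s)`. With `a + b = c`, every A-degree of `⟨D⟩` therefore lies in
`[-c - 2(|s_B| - 1), c + 2(|s_A| - 1)]`.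
-/

open Finset
open scoped Pointwise

section Support

variable {R : Type*}

lemma LaurentPolynomial.support_coeff_T_subset [Semiring R] (k : ℤ) :
    (T k : R[T;T⁻¹]).coeff.support ⊆ Icc k k := by
  rw [Icc_self]
  exact Finsupp.support_single_subset

lemma LaurentPolynomial.support_coeff_mul_subset_Icc [Semiring R] {p q : R[T;T⁻¹]}
    {a b a' b' : ℤ} (hp : p.coeff.support ⊆ Icc a b) (hq : q.coeff.support ⊆ Icc a' b') :
    (p * q).coeff.support ⊆ Icc (a + a') (b + b') :=
  (AddMonoidAlgebra.support_coeff_mul_subset p q).trans <|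
    (add_subset_add hp hq).trans (Icc_add_Icc_subset _ _ _ _)

lemma LaurentPolynomial.support_coeff_pow_subset_Icc [Semiring R] {q : R[T;T⁻¹]} {a b : ℤ}
    (hq : q.coeff.support ⊆ Icc a b) (n : ℕ) :
    (q ^ n).coeff.support ⊆ Icc (n * a) (n * b) := by
  induction n with
  | zero => simpa [← T_zero] using support_coeff_T_subset (R := R) 0
  | succ n ih =>
    rw [pow_succ]
    convert support_coeff_mul_subset_Icc ih hq using 2 <;> push_cast <;> ring

lemma LaurentPolynomial.support_coeff_neg_T_two_sub_T_neg_two_subset [Ring R] :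
    (-T 2 - T (-2) : R[T;T⁻¹]).coeff.support ⊆ Icc (-2) 2 := by
  rw [AddMonoidAlgebra.coeff_sub, AddMonoidAlgebra.coeff_neg]
  refine Finsupp.support_sub.trans (union_subset ?_ ?_)
  · rw [Finsupp.support_neg]
    exact (support_coeff_T_subset 2).trans (Icc_subset_Icc (by norm_num) le_rfl)
  · exact (support_coeff_T_subset (-2)).trans (Icc_subset_Icc le_rfl (by norm_num))

lemma LaurentPolynomial.support_coeff_T_mul_neg_T_two_sub_T_neg_two_pow_subset [Ring R]
    (k : ℤ) (n : ℕ) :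
    (T k * (-T 2 - T (-2)) ^ n : R[T;T⁻¹]).coeff.support ⊆ Icc (k - 2 * n) (k + 2 * n) := by
  convert support_coeff_mul_subset_Icc (support_coeff_T_subset k)
    (support_coeff_pow_subset_Icc support_coeff_neg_T_two_sub_T_neg_two_subset n) using 2 <;>
    ring

end Support

section Hamming

variable {ι : Type*} [Fintype ι] [DecidableEq ι]

lemma hammingDist_update_add_one {β : ι → Type*} [∀ i, DecidableEq (β i)] {x y : ∀ i, β i}
    {i : ι} (h : x i ≠ y i) :
    hammingDist (Function.update x i (y i)) y + 1 = hammingDist x y := by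
  have : ({j | Function.update x i (y i) j ≠ y j} : Finset ι) =
      ({j | x j ≠ y j} : Finset ι).erase i := by
    ext j
    by_cases hj : j = i <;> simp [hj, Function.update_of_ne]
  rw [hammingDist, hammingDist, this, card_erase_add_one (by simpa using h)]

lemma le_add_hammingDist_of_flip {f : (ι → Bool) → ℕ}
    (hf : ∀ s i, f s ≤ f (Function.update s i (!s i)) + 1) (s t : ι → Bool) :
    f s ≤ f t + hammingDist s t := by
  induction h : hammingDist s t generalizing s with
  | zero => simp [hammingDist_eq_zero.1 h]
  | succ n ih =>
    obtain ⟨i, hi⟩ := Function.ne_iff.1 (hammingDist_pos.1 (by omega : 0 < hammingDist s t))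
    have ht : t i = !s i := Bool.eq_not_of_ne hi.symm
    have hflip := hf s i
    rw [← ht] at hflip
    have := ih (Function.update s i (t i)) (by have := hammingDist_update_add_one hi; omega)
    omega

end Hamming

section States

variable {c : ℕ}

lemma aCount_add_bCount (s : Fin c → Bool) : aCount s + bCount s = c := by
  simpa [aCount, bCount, add_comm] using
    card_filter_add_card_filter_not (s := univ) fun i => s i = true

lemma bCount_eq_hammingDist (s : Fin c → Bool) : bCount s = hammingDist s fun _ => false := by
  simp [bCount, hammingDist]

lemma aCount_eq_hammingDist (s : Fin c → Bool) : aCount s = hammingDist s fun _ => true := by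
  simp [aCount, hammingDist]

end States

section Bracket

variable {c : ℕ} {circles : (Fin c → Bool) → ℕ}

lemma circles_le_add_hammingDist
    (hadj : ∀ (s : Fin c → Bool) (i : Fin c),
      circles (Function.update s i (!s i)) = circles s + 1 ∨
      circles s = circles (Function.update s i (!s i)) + 1)
    (s t : Fin c → Bool) : circles s ≤ circles t + hammingDist s t :=
  le_add_hammingDist_of_flip (fun s i => by rcases hadj s i with h | h <;> omega) s t

lemma support_coeff_state_term_subset {R : Type*} [Ring R] (hpos : ∀ s, 1 ≤ circles s)
    (hadj : ∀ (s : Fin c → Bool) (i : Fin c),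
      circles (Function.update s i (!s i)) = circles s + 1 ∨
      circles s = circles (Function.update s i (!s i)) + 1)
    (s : Fin c → Bool) :
    (T ((aCount s : ℤ) - bCount s) * (-T 2 - T (-2)) ^ (circles s - 1) :
      R[T;T⁻¹]).coeff.support ⊆
      Icc (-c - 2 * ((circles fun _ => true : ℤ) - 1))
        (c + 2 * ((circles fun _ => false : ℤ) - 1)) := by
  refine (support_coeff_T_mul_neg_T_two_sub_T_neg_two_pow_subset _ _).trans (Icc_subset_Icc ?_ ?_)
  all_goals
    have hA := bCount_eq_hammingDist s ▸ circles_le_add_hammingDist hadj s fun _ => false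
    have hB := aCount_eq_hammingDist s ▸ circles_le_add_hammingDist hadj s fun _ => true
    have := aCount_add_bCount s
    have := hpos s
    omega

end Bracket

/-- For a connected link diagram `D` with `c` crossings, model its states as
functions `s : Fin c → Bool` (`false` = A-smoothing, `true` = B-smoothing) with circle count
`|s| = circles s ≥ 1`, where changing a single smoothing changes `|s|` by exactly `±1`.  The
Kauffman bracket is the Laurent polynomial
`⟨D⟩ = Σ_s A^{a(s)-b(s)} (-A² - A⁻²)^{|s|-1}`, summed over all `2^c` states.  Then
`max-deg_A ⟨D⟩ - min-deg_A ⟨D⟩ ≤ 2(c + |s_A| + |s_B| - 2)`, where `s_A` is the all-A state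
and `s_B` the all-B state. -/
theorem kauffman_bracket_span_bound (c : ℕ)
    (circles : (Fin c → Bool) → ℕ)
    (hpos : ∀ s, 1 ≤ circles s)
    (hadj : ∀ (s : Fin c → Bool) (i : Fin c),
      circles (Function.update s i (!s i)) = circles s + 1 ∨
      circles s = circles (Function.update s i (!s i)) + 1)
    (bracket : LaurentPolynomial ℤ)
    (hbr : bracket = ∑ s : Fin c → Bool,
      T ((aCount s : ℤ) - bCount s) * (-(T 2) - T (-2)) ^ (circles s - 1)) :
    ∀ m ∈ bracket.coeff.support, ∀ m' ∈ bracket.coeff.support,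
      m - m' ≤ 2 * ((c : ℤ) + circles (fun _ => false) + circles (fun _ => true) - 2) := by
  have hsupp : bracket.coeff.support ⊆
      Icc (-c - 2 * ((circles fun _ => true : ℤ) - 1))
        (c + 2 * ((circles fun _ => false : ℤ) - 1)) := by
    rw [hbr, AddMonoidAlgebra.coeff_sum]
    exact Finsupp.support_finsetSum.trans
      (biUnion_subset.2 fun s _ => support_coeff_state_term_subset hpos hadj s)
  intro m hm m' hm'
  have := mem_Icc.1 (hsupp hm)
  have := mem_Icc.1 (hsupp hm')
  linarith
end

section
/- The genus of a quasi-tree Q of a connected ribbon graph equals half the rank over GF(2) of the adjacency matrix of the intersection graph of the chord sub-diagram C consisting of the chords corresponding to edges of Q. -/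
/-- The number of orbits (cycles, including fixed points) of a permutation. -/
noncomputable def permOrbits {α : Type*} [Fintype α] (σ : Equiv.Perm α) : ℕ :=
  Nat.card (MulAction.orbitRel.Quotient (Subgroup.closure ({σ} : Set (Equiv.Perm α))) α)

/-- A chord diagram with `m` chords on a circle with `2m` marked points: chord `i` has
endpoints `(ep i).1 < (ep i).2`, and the endpoints exhaust the marked points.  The pairing
involution swapping the two endpoints of each chord. -/
noncomputable def chordPairing (m : ℕ) (ep : Fin m → Fin (2 * m) × Fin (2 * m))
    (hall : Function.Bijective
      (fun x : Fin m × Bool => if x.2 then (ep x.1).2 else (ep x.1).1)) :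
    Equiv.Perm (Fin (2 * m)) :=
  ((Equiv.ofBijective _ hall).symm.trans
    ((Equiv.prodCongr (Equiv.refl (Fin m))
      (Function.Involutive.toPerm not fun b => Bool.not_not b)).trans
        (Equiv.ofBijective _ hall)))

/-- Chords `i` and `j` interleave (cross), with `i` "starting first". -/
def interleaves {m : ℕ} (ep : Fin m → Fin (2 * m) × Fin (2 * m)) (i j : Fin m) : Prop :=
  (ep i).1 < (ep j).1 ∧ (ep j).1 < (ep i).2 ∧ (ep i).2 < (ep j).2

instance {m : ℕ} (ep : Fin m → Fin (2 * m) × Fin (2 * m)) (i j : Fin m) :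
    Decidable (interleaves ep i j) := by unfold interleaves; infer_instance

/-- The adjacency matrix over GF(2) of the intersection graph of the chord diagram. -/
def interMatrix {m : ℕ} (ep : Fin m → Fin (2 * m) × Fin (2 * m)) :
    Matrix (Fin m) (Fin m) (ZMod 2) :=
  fun i j => if interleaves ep i j ∨ interleaves ep j i then 1 else 0

/-!
Let `τ` swap the endpoints of each chord and let `r` rotate the circle. A function `x` on the
marked points is constant on faces, i.e. on the orbits of `τ⁻¹ r⁻¹`, exactly when
`x (τ k) = x (r k)` for all `k`; over `GF(2)` there are `2 ^ f` of them, `f` the number of faces.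
Such an `x` jumps by `c i = x aᵢ + x bᵢ` whenever one passes an endpoint of chord `i`, so `x p`
is `x 0` plus the sum of the `c j` over the chords `j` with an odd number of endpoints in
`[0, p)`. Conversely this potential is consistent with the chords iff, for each `i`, `c i` is the
sum of the `c j` over the chords with an odd number of endpoints in `[aᵢ, bᵢ)`, namely `i`
itself and the chords crossing it: `M c = 0`. Hence `2 ^ f = 2 · 2 ^ (m - rank M)`, and Euler's
relation `2g = 1 + m - f` becomes `2g = rank M`.
-/

open Finset Matrix

section InvariantFunctions

variable {α β : Type*}

theorem apply_eq_of_mem_closure_singleton {π g : Equiv.Perm α} {x : α → β}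
    (hx : ∀ a, x (π a) = x a) (hg : g ∈ Subgroup.closure {π}) (a : α) : x (g a) = x a := by
  induction hg using Subgroup.closure_induction generalizing a with
  | mem g hg => rw [Set.mem_singleton_iff.1 hg]; exact hx a
  | one => rfl
  | mul g h _ _ ihg ihh => exact (ihg (h a)).trans (ihh a)
  | inv g _ ih => simpa using (ih (g⁻¹ a)).symm

theorem card_invariant_eq_pow_permOrbits [Fintype α] (π : Equiv.Perm α) :
    Nat.card {x : α → β // ∀ a, x (π a) = x a} = Nat.card β ^ permOrbits π := by
  let e : {x : α → β // ∀ a, x (π a) = x a} ≃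
      (MulAction.orbitRel.Quotient (Subgroup.closure ({π} : Set (Equiv.Perm α))) α → β) :=
    { toFun x := Quotient.lift x.1 <| by
        rintro a b ⟨g, rfl⟩
        exact apply_eq_of_mem_closure_singleton x.2 g.2 b
      invFun y := ⟨fun a => y ⟦a⟧, fun a => congrArg y <| Quotient.sound
        ⟨⟨π, Subgroup.mem_closure_singleton_self π⟩, rfl⟩⟩
      left_inv _ := rfl
      right_inv y := funext fun q => Quotient.inductionOn q fun _ => rfl }
  rw [Nat.card_congr e, Nat.card_fun]
  rfl

theorem forall_apply_mul_inv_eq_iff {σ ρ : Equiv.Perm α} {x : α → β} :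
    (∀ a, x ((σ * ρ⁻¹) a) = x a) ↔ ∀ a, x (σ a) = x (ρ a) := by
  rw [← ρ.forall_congr_right]
  simp

theorem apply_eq_apply_zero_of_apply_finRotate {n : ℕ} [NeZero n] {y : Fin n → β}
    (hy : ∀ k, y (finRotate n k) = y k) (k : Fin n) : y k = y 0 := by
  obtain ⟨n, rfl⟩ := Nat.exists_eq_succ_of_ne_zero (NeZero.ne n)
  induction k using Fin.induction with
  | zero => rfl
  | succ k ih => rw [← Fin.coeSucc_eq_succ, ← finRotate_apply, hy, ih]

theorem val_finRotate {n : ℕ} (k : Fin n) : (finRotate n k : ℕ) = (k + 1) % n := by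
  have := k.neZero
  rw [finRotate_apply, Fin.val_add, Fin.val_one', Nat.add_mod_mod]

end InvariantFunctions

section ChordDiagram

variable {m : ℕ} {ep : Fin m → Fin (2 * m) × Fin (2 * m)}

abbrev chordEndpoint (ep : Fin m → Fin (2 * m) × Fin (2 * m)) (x : Fin m × Bool) :
    Fin (2 * m) :=
  if x.2 then (ep x.1).2 else (ep x.1).1

noncomputable def chordOf (hall : Function.Bijective (chordEndpoint ep)) (k : Fin (2 * m)) :
    Fin m :=
  ((Equiv.ofBijective _ hall).symm k).1

theorem chordOf_chordEndpoint (hall : Function.Bijective (chordEndpoint ep))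
    (x : Fin m × Bool) : chordOf hall (chordEndpoint ep x) = x.1 := by
  simp [chordOf, Equiv.ofBijective_symm_apply_apply]

theorem chordPairing_chordEndpoint (hall : Function.Bijective (chordEndpoint ep))
    (i : Fin m) (b : Bool) :
    chordPairing m ep hall (chordEndpoint ep (i, b)) = chordEndpoint ep (i, !b) := by
  simp only [chordPairing, Equiv.trans_apply, Equiv.ofBijective_symm_apply_apply]
  rfl

theorem chordPairing_inv (hall : Function.Bijective (chordEndpoint ep)) :
    (chordPairing m ep hall)⁻¹ = chordPairing m ep hall := by
  refine inv_eq_of_mul_eq_one_right (Equiv.ext fun k => ?_)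
  obtain ⟨⟨i, b⟩, rfl⟩ := hall.2 k
  simp [chordPairing_chordEndpoint]

theorem add_apply_chordPairing (hall : Function.Bijective (chordEndpoint ep))
    {R : Type*} [AddCommMagma R] (x : Fin (2 * m) → R) (k : Fin (2 * m)) :
    x k + x (chordPairing m ep hall k)
      = x (ep (chordOf hall k)).1 + x (ep (chordOf hall k)).2 := by
  obtain ⟨⟨i, b⟩, rfl⟩ := hall.2 k
  rw [chordPairing_chordEndpoint, chordOf_chordEndpoint]
  cases b
  · rfl
  · exact add_comm _ _

theorem sum_mul_endpoint_indicator (hall : Function.Bijective (chordEndpoint ep))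
    {R : Type*} [Semiring R] (c : Fin m → R) (k : Fin (2 * m)) :
    ∑ j, c j * ((if ((ep j).1 : ℕ) = k then 1 else 0) + (if ((ep j).2 : ℕ) = k then 1 else 0))
      = c (chordOf hall k) := by
  obtain ⟨⟨i, b⟩, rfl⟩ := hall.2 k
  have key : ∀ j b',
      ((chordEndpoint ep (j, b') : ℕ) = chordEndpoint ep (i, b)) ↔ j = i ∧ b' = b :=
    fun j b' => Fin.val_inj.trans (hall.1.eq_iff.trans Prod.mk_inj)
  have key₁ (j) : ((ep j).1 : ℕ) = chordEndpoint ep (i, b) ↔ j = i ∧ false = b :=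
    key j false
  have key₂ (j) : ((ep j).2 : ℕ) = chordEndpoint ep (i, b) ↔ j = i ∧ true = b :=
    key j true
  rw [chordOf_chordEndpoint]
  cases b <;> simp [key₁, key₂]

def endpointParity (ep : Fin m → Fin (2 * m) × Fin (2 * m)) (j : Fin m) (p : ℕ) : ZMod 2 :=
  (if ((ep j).1 : ℕ) < p then 1 else 0) + (if ((ep j).2 : ℕ) < p then 1 else 0)

def chordPotential (ep : Fin m → Fin (2 * m) × Fin (2 * m)) (c : Fin m → ZMod 2) (p : ℕ) :
    ZMod 2 :=
  ∑ j, c j * endpointParity ep j p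

theorem endpointParity_succ (j : Fin m) (p : ℕ) :
    endpointParity ep j (p + 1) = endpointParity ep j p
      + ((if ((ep j).1 : ℕ) = p then 1 else 0) + (if ((ep j).2 : ℕ) = p then 1 else 0)) := by
  simp only [endpointParity]
  split_ifs <;> first | decide | omega

theorem chordPotential_zero (c : Fin m → ZMod 2) : chordPotential ep c 0 = 0 := by
  simp [chordPotential, endpointParity]

theorem chordPotential_two_mul (c : Fin m → ZMod 2) : chordPotential ep c (2 * m) = 0 := by
  simp [chordPotential, endpointParity, CharTwo.add_self_eq_zero]

theorem chordPotential_succ (hall : Function.Bijective (chordEndpoint ep))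
    (c : Fin m → ZMod 2) (k : Fin (2 * m)) :
    chordPotential ep c (k + 1) = chordPotential ep c k + c (chordOf hall k) := by
  rw [chordPotential, chordPotential, ← sum_mul_endpoint_indicator hall c k, ← sum_add_distrib]
  simp only [endpointParity_succ, mul_add]

theorem chordPotential_finRotate (hall : Function.Bijective (chordEndpoint ep))
    (c : Fin m → ZMod 2) (k : Fin (2 * m)) :
    chordPotential ep c (finRotate (2 * m) k) = chordPotential ep c k + c (chordOf hall k) := by
  rw [← chordPotential_succ hall, val_finRotate]
  rcases (Nat.succ_le_of_lt k.isLt).lt_or_eq with hlt | heq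
  · rw [Nat.mod_eq_of_lt hlt]
  · have heq : (k : ℕ) + 1 = 2 * m := heq
    rw [heq, Nat.mod_self, chordPotential_zero, chordPotential_two_mul]

theorem endpointParity_snd_add_fst (hall : Function.Bijective (chordEndpoint ep))
    (hlt : ∀ i, (ep i).1 < (ep i).2) (i j : Fin m) :
    endpointParity ep j (ep i).2 + endpointParity ep j (ep i).1
      = interMatrix ep i j + if i = j then 1 else 0 := by
  have hi := Fin.lt_def.1 (hlt i)
  have hj := Fin.lt_def.1 (hlt j)
  rcases eq_or_ne i j with rfl | hij
  · simp only [endpointParity, interMatrix, interleaves, Fin.lt_def]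
    split_ifs <;> first | decide | omega
  · have hne (b b' : Bool) : (chordEndpoint ep (i, b) : ℕ) ≠ chordEndpoint ep (j, b') :=
      fun h => hij (congrArg Prod.fst (hall.1 (Fin.val_injective h)))
    have h₁ : ((ep i).1 : ℕ) ≠ (ep j).1 := hne false false
    have h₂ : ((ep i).2 : ℕ) ≠ (ep j).2 := hne true true
    have h₃ : ((ep i).1 : ℕ) ≠ (ep j).2 := hne false true
    have h₄ : ((ep i).2 : ℕ) ≠ (ep j).1 := hne true false
    simp only [endpointParity, interMatrix, interleaves, Fin.lt_def, if_neg hij]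
    split_ifs <;> first | decide | omega

theorem chordPotential_snd_add_fst (hall : Function.Bijective (chordEndpoint ep))
    (hlt : ∀ i, (ep i).1 < (ep i).2) (c : Fin m → ZMod 2) (i : Fin m) :
    chordPotential ep c (ep i).2 + chordPotential ep c (ep i).1
      = (interMatrix ep *ᵥ c) i + c i := by
  rw [chordPotential, chordPotential, ← sum_add_distrib]
  simp only [← mul_add, endpointParity_snd_add_fst hall hlt]
  simp [mulVec, dotProduct, mul_comm (c _), add_mul, sum_add_distrib]

theorem apply_finRotate_of_forall_apply_chordPairing
    (hall : Function.Bijective (chordEndpoint ep))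
    {x : Fin (2 * m) → ZMod 2}
    (hx : ∀ k, x (chordPairing m ep hall k) = x (finRotate (2 * m) k))
    (k : Fin (2 * m)) :
    x (finRotate (2 * m) k) = x k + (x (ep (chordOf hall k)).1 + x (ep (chordOf hall k)).2) := by
  rw [← hx, ← add_apply_chordPairing hall, ← add_assoc, CharTwo.add_self_eq_zero, zero_add]

theorem chordPotential_chordPairing (hall : Function.Bijective (chordEndpoint ep))
    (hlt : ∀ i, (ep i).1 < (ep i).2) {c : Fin m → ZMod 2} (hc : interMatrix ep *ᵥ c = 0)
    (k : Fin (2 * m)) :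
    chordPotential ep c (chordPairing m ep hall k)
      = chordPotential ep c k + c (chordOf hall k) := by
  have h := add_apply_chordPairing hall (fun k => chordPotential ep c k) k
  rw [add_comm (chordPotential ep c (ep (chordOf hall k)).1), chordPotential_snd_add_fst hall hlt,
    hc, Pi.zero_apply, zero_add] at h
  grind

theorem eq_add_chordPotential_of_forall_apply_chordPairing [NeZero m]
    (hall : Function.Bijective (chordEndpoint ep))
    {x : Fin (2 * m) → ZMod 2}
    (hx : ∀ k, x (chordPairing m ep hall k) = x (finRotate (2 * m) k))
    (k : Fin (2 * m)) :
    x k = x 0 + chordPotential ep (fun i => x (ep i).1 + x (ep i).2) k := by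
  set c : Fin m → ZMod 2 := fun i => x (ep i).1 + x (ep i).2
  have hy : ∀ k, x (finRotate (2 * m) k) + chordPotential ep c (finRotate (2 * m) k)
      = x k + chordPotential ep c k := fun k => by
    rw [apply_finRotate_of_forall_apply_chordPairing hall hx, chordPotential_finRotate hall]
    grind
  have := apply_eq_apply_zero_of_apply_finRotate (y := fun k => x k + chordPotential ep c k) hy k
  simp only [Fin.val_zero, chordPotential_zero] at this
  grind

theorem interMatrix_mulVec_eq_zero_of_forall_apply_chordPairing [NeZero m]
    (hall : Function.Bijective (chordEndpoint ep)) (hlt : ∀ i, (ep i).1 < (ep i).2)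
    {x : Fin (2 * m) → ZMod 2}
    (hx : ∀ k, x (chordPairing m ep hall k) = x (finRotate (2 * m) k)) :
    interMatrix ep *ᵥ (fun i => x (ep i).1 + x (ep i).2) = 0 := by
  funext i
  have h := chordPotential_snd_add_fst hall hlt (fun i => x (ep i).1 + x (ep i).2) i
  rw [eq_add_chordPotential_of_forall_apply_chordPairing hall hx (ep i).1,
    eq_add_chordPotential_of_forall_apply_chordPairing hall hx (ep i).2] at h
  rw [Pi.zero_apply]
  grind

noncomputable def faceInvariantEquiv [NeZero m] (hall : Function.Bijective (chordEndpoint ep))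
    (hlt : ∀ i, (ep i).1 < (ep i).2) :
    {x : Fin (2 * m) → ZMod 2 //
      ∀ k, x (chordPairing m ep hall k) = x (finRotate (2 * m) k)} ≃
      ZMod 2 × LinearMap.ker (interMatrix ep).mulVecLin where
  toFun x := (x.1 0, ⟨fun i => x.1 (ep i).1 + x.1 (ep i).2,
    interMatrix_mulVec_eq_zero_of_forall_apply_chordPairing hall hlt x.2⟩)
  invFun p := ⟨fun k => p.1 + chordPotential ep p.2 k, fun k => by
    dsimp only
    rw [chordPotential_chordPairing hall hlt p.2.2, chordPotential_finRotate hall]⟩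
  left_inv x := Subtype.ext <| funext fun k =>
    (eq_add_chordPotential_of_forall_apply_chordPairing hall x.2 k).symm
  right_inv := by
    rintro ⟨t, c, hc⟩
    refine Prod.ext (by simp [chordPotential_zero]) (Subtype.ext <| funext fun i => ?_)
    have h := chordPotential_snd_add_fst hall hlt c i
    rw [show (interMatrix ep *ᵥ c) i = 0 from congrFun hc i, zero_add] at h
    change t + chordPotential ep c (ep i).1 + (t + chordPotential ep c (ep i).2) = c i
    grind

theorem permOrbits_faces_eq_one_add_finrank_ker [NeZero m]
    (hall : Function.Bijective (chordEndpoint ep)) (hlt : ∀ i, (ep i).1 < (ep i).2) :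
    permOrbits ((chordPairing m ep hall)⁻¹ * (finRotate (2 * m))⁻¹)
      = 1 + Module.finrank (ZMod 2) (LinearMap.ker (interMatrix ep).mulVecLin) := by
  apply Nat.pow_right_injective le_rfl
  calc 2 ^ permOrbits ((chordPairing m ep hall)⁻¹ * (finRotate (2 * m))⁻¹)
      = Nat.card {x : Fin (2 * m) → ZMod 2 //
          ∀ k, x (((chordPairing m ep hall)⁻¹ * (finRotate (2 * m))⁻¹) k) = x k} := by
        rw [card_invariant_eq_pow_permOrbits, Nat.card_zmod]
    _ = Nat.card {x : Fin (2 * m) → ZMod 2 //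
          ∀ k, x (chordPairing m ep hall k) = x (finRotate (2 * m) k)} := by
        rw [chordPairing_inv hall]
        exact Nat.card_congr (Equiv.subtypeEquivRight fun _ => forall_apply_mul_inv_eq_iff)
    _ = Nat.card (ZMod 2 × LinearMap.ker (interMatrix ep).mulVecLin) :=
        Nat.card_congr (faceInvariantEquiv hall hlt)
    _ = 2 ^ (1 + Module.finrank (ZMod 2) (LinearMap.ker (interMatrix ep).mulVecLin)) := by
        rw [Nat.card_prod, Module.natCard_eq_pow_finrank (K := ZMod 2)
          (V := LinearMap.ker (interMatrix ep).mulVecLin), Nat.card_zmod, pow_add, pow_one]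

end ChordDiagram

/-- The genus of a quasi-tree `Q` of a connected ribbon graph equals half the
rank over GF(2) of the adjacency matrix of the intersection graph of the chord diagram `C`
formed by the chords corresponding to the edges of `Q` on the (single) boundary circle of a
regular neighborhood of `Q`.

Model: the chord diagram `C` has `m` chords with endpoints `ep` on the circle `Fin (2m)`
(cyclic order given by the rotation `finRotate`); the regular neighborhood of `Q` is the
one-vertex ribbon graph `(σ₀, σ₁, σ₂) = (finRotate (2m), chordPairing, σ₁⁻¹σ₀⁻¹)` of this
chord diagram, whose genus is the genus `g(Q)` of the quasi-tree, given by the Euler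
relation `2g = 1 + m - f` with `f` the number of faces.  Conclusion:
`2 g(Q) = rank_{GF(2)} (interMatrix)`. -/
theorem quasi_tree_genus_eq_half_intersection_rank (m : ℕ)
    (ep : Fin m → Fin (2 * m) × Fin (2 * m))
    (hlt : ∀ i, (ep i).1 < (ep i).2)
    (hall : Function.Bijective
      (fun x : Fin m × Bool => if x.2 then (ep x.1).2 else (ep x.1).1))
    (g : ℕ)
    (hg : 2 * (g : ℤ) = 1 + m -
      permOrbits ((chordPairing m ep hall)⁻¹ * (finRotate (2 * m))⁻¹)) :
    2 * g = (interMatrix ep).rank := by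
  rcases Nat.eq_zero_or_pos m with rfl | hm
  · have : IsEmpty (Fin (2 * 0)) := Fin.isEmpty'
    have hfaces : permOrbits ((chordPairing 0 ep hall)⁻¹ * (finRotate (2 * 0))⁻¹) = 0 :=
      Nat.card_of_isEmpty
    omega
  · have : NeZero m := ⟨hm.ne'⟩
    have hrank := LinearMap.finrank_range_add_finrank_ker (interMatrix ep).mulVecLin
    rw [Module.finrank_fin_fun] at hrank
    rw [permOrbits_faces_eq_one_add_finrank_ker hall hlt] at hg
    unfold Matrix.rank
    omega
end
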